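/- For all atomic propositions p, q ∈ 𝒫 and every infinite word σ over 2^𝒫: V(σ, □·(p ⇒ ◇·q)) = ( W(σ, □(p ⇒ ◇q)), W(σ, □◇p ⇒ □◇q), W(σ, ◇□p ⇒ □◇q), W(σ, □p ⇒ ◇q) ). In particular the four components of the robust semantics of □·(p ⇒ ◇·q) are exactly: the LTL response property, strong fairness (compassion), weak fairness (justice), and the implication □p ⇒ ◇q. -/

import Mathlib

/-- Truth values as 4-tuples of Booleans. -/
abbrev TV := Bool × Bool × Bool × Bool

def ttop : TV := (true, true, true, true)
def tbot : TV := (false, false, false, false)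

/-- Componentwise order on 4-tuples. -/
def tle (a b : TV) : Prop :=
  a.1 ≤ b.1 ∧ a.2.1 ≤ b.2.1 ∧ a.2.2.1 ≤ b.2.2.1 ∧ a.2.2.2 ≤ b.2.2.2

instance : DecidableRel tle := fun a b =>
  decidable_of_iff (a.1 ≤ b.1 ∧ a.2.1 ≤ b.2.1 ∧ a.2.2.1 ≤ b.2.2.1 ∧ a.2.2.2 ≤ b.2.2.2) Iff.rfl

def tmeet (a b : TV) : TV :=
  (a.1 && b.1, a.2.1 && b.2.1, a.2.2.1 && b.2.2.1, a.2.2.2 && b.2.2.2)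

def tjoin (a b : TV) : TV :=
  (a.1 || b.1, a.2.1 || b.2.1, a.2.2.1 || b.2.2.1, a.2.2.2 || b.2.2.2)

/-- da Costa negation. -/
def tneg (a : TV) : TV := if a = ttop then tbot else ttop

/-- Residual implication. -/
def timp (a b : TV) : TV := if tle a b then ttop else b

/-- Infimum of a Boolean sequence. -/
noncomputable def bInf (f : ℕ → Bool) : Bool :=
  @decide (∀ i, f i = true) (Classical.propDecidable _)

/-- Supremum of a Boolean sequence. -/
noncomputable def bSup (f : ℕ → Bool) : Bool :=
  @decide (∃ i, f i = true) (Classical.propDecidable _)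

/-- Bounded infimum over `i < n`. -/
noncomputable def bInfLt (n : ℕ) (f : ℕ → Bool) : Bool :=
  @decide (∀ i, i < n → f i = true) (Classical.propDecidable _)

/-- Bounded supremum over `i < n`. -/
noncomputable def bSupLt (n : ℕ) (f : ℕ → Bool) : Bool :=
  @decide (∃ i, i < n ∧ f i = true) (Classical.propDecidable _)

/-- Suffix of an infinite word. -/
def suffix {P : Type} (σ : ℕ → Set P) (i : ℕ) : ℕ → Set P := fun j => σ (i + j)

/-- rLTL(□,◇) formulas. -/
inductive RFormula (P : Type) : Type where
  | atom : P → RFormula P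
  | not : RFormula P → RFormula P
  | and : RFormula P → RFormula P → RFormula P
  | or : RFormula P → RFormula P → RFormula P
  | imp : RFormula P → RFormula P → RFormula P
  | always : RFormula P → RFormula P
  | eventually : RFormula P → RFormula P
  deriving DecidableEq

open scoped Classical in
/-- The 5-valued rLTL semantics. -/
noncomputable def rV {P : Type} : RFormula P → (ℕ → Set P) → TV
  | .atom p, σ => if p ∈ σ 0 then ttop else tbot
  | .not φ, σ => tneg (rV φ σ)
  | .and φ ψ, σ => tmeet (rV φ σ) (rV ψ σ)
  | .or φ ψ, σ => tjoin (rV φ σ) (rV ψ σ)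
  | .imp φ ψ, σ => timp (rV φ σ) (rV ψ σ)
  | .always φ, σ =>
      (bInf fun i => (rV φ (suffix σ i)).1,
       bSup fun j => bInf fun i => (rV φ (suffix σ (j + i))).2.1,
       bInf fun j => bSup fun i => (rV φ (suffix σ (j + i))).2.2.1,
       bSup fun i => (rV φ (suffix σ i)).2.2.2)
  | .eventually φ, σ =>
      (bSup fun i => (rV φ (suffix σ i)).1,
       bSup fun i => (rV φ (suffix σ i)).2.1,
       bSup fun i => (rV φ (suffix σ i)).2.2.1,
       bSup fun i => (rV φ (suffix σ i)).2.2.2)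

/-- Projection onto the k-th component. -/
def comp : Fin 4 → TV → Bool
  | 0, a => a.1
  | 1, a => a.2.1
  | 2, a => a.2.2.1
  | 3, a => a.2.2.2

/-- LTL(□,◇) formulas, built from atomic propositions by ¬, ∨, □, ◇. -/
inductive LFormula (P : Type) : Type where
  | atom : P → LFormula P
  | not : LFormula P → LFormula P
  | or : LFormula P → LFormula P → LFormula P
  | always : LFormula P → LFormula P
  | eventually : LFormula P → LFormula P

/-- Derived conjunction. -/
def LFormula.and {P : Type} (φ ψ : LFormula P) : LFormula P :=
  .not (.or (.not φ) (.not ψ))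

/-- Derived implication. -/
def LFormula.imp {P : Type} (φ ψ : LFormula P) : LFormula P :=
  .or (.not φ) ψ

open scoped Classical in
/-- The standard Boolean LTL semantics. -/
noncomputable def lW {P : Type} : LFormula P → (ℕ → Set P) → Bool
  | .atom p, σ => if p ∈ σ 0 then true else false
  | .not φ, σ => !(lW φ σ)
  | .or φ ψ, σ => lW φ σ || lW ψ σ
  | .always φ, σ => bInf fun i => lW φ (suffix σ i)
  | .eventually φ, σ => bSup fun i => lW φ (suffix σ i)

/-! A □-free rLTL formula only ever takes the values ⊥ and ⊤: its robust value is its LTL value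
repeated four times. So for such φ the four components of `□·φ` are the LTL
values of `□φ`, `◇□φ`, `□◇φ` and `◇φ`. For `φ = p ⇒ ◇q` the last three collapse to the fairness
properties because the truth of `◇q` is antitone along the word: either it holds at every position
or it fails from some position on. -/

theorem bInf_eq_true {f : ℕ → Bool} : bInf f = true ↔ ∀ i, f i = true :=
  @decide_eq_true_iff _ (Classical.propDecidable _)

theorem bSup_eq_true {f : ℕ → Bool} : bSup f = true ↔ ∃ i, f i = true :=
  @decide_eq_true_iff _ (Classical.propDecidable _)

theorem bInf_eq_false {f : ℕ → Bool} : bInf f = false ↔ ∃ i, f i = false := by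
  simp [← Bool.not_eq_true, bInf_eq_true]

theorem bSup_eq_false {f : ℕ → Bool} : bSup f = false ↔ ∀ i, f i = false := by
  simp [← Bool.not_eq_true, bSup_eq_true]

@[simp]
theorem suffix_suffix {P : Type} (σ : ℕ → Set P) (i j : ℕ) :
    suffix (suffix σ i) j = suffix σ (i + j) := by
  funext k
  simp only [suffix, add_assoc]

def tconst (b : Bool) : TV := (b, b, b, b)

theorem tneg_tconst (a : Bool) : tneg (tconst a) = tconst (!a) := by
  cases a <;> rfl

theorem timp_tconst (a b : Bool) : timp (tconst a) (tconst b) = tconst (!a || b) := by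
  cases a <;> cases b <;> rfl

namespace RFormula

variable {P : Type}

def toLTL : RFormula P → LFormula P
  | atom p => .atom p
  | not φ => .not φ.toLTL
  | and φ ψ => φ.toLTL.and ψ.toLTL
  | or φ ψ => .or φ.toLTL ψ.toLTL
  | imp φ ψ => φ.toLTL.imp ψ.toLTL
  | always φ => .always φ.toLTL
  | eventually φ => .eventually φ.toLTL

def AlwaysFree : RFormula P → Prop
  | atom _ => True
  | not φ => φ.AlwaysFree
  | and φ ψ | or φ ψ | imp φ ψ => φ.AlwaysFree ∧ ψ.AlwaysFree
  | always _ => False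
  | eventually φ => φ.AlwaysFree

end RFormula

theorem rV_eq_tconst_lW {P : Type} {φ : RFormula P} (hφ : φ.AlwaysFree) (σ : ℕ → Set P) :
    rV φ σ = tconst (lW φ.toLTL σ) := by
  induction φ generalizing σ with
  | atom p => by_cases hp : p ∈ σ 0 <;> simp [rV, lW, RFormula.toLTL, hp, tconst, ttop, tbot]
  | not φ ih => rw [rV, ih hφ, tneg_tconst]; rfl
  | and φ ψ ihφ ihψ =>
    rw [rV, ihφ hφ.1, ihψ hφ.2]
    simp [tconst, tmeet, RFormula.toLTL, LFormula.and, lW]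
  | or φ ψ ihφ ihψ => rw [rV, ihφ hφ.1, ihψ hφ.2]; rfl
  | imp φ ψ ihφ ihψ => rw [rV, ihφ hφ.1, ihψ hφ.2, timp_tconst]; rfl
  | always φ _ => exact hφ.elim
  | eventually φ ih => simp only [rV, ih hφ]; rfl

theorem rV_always_of_alwaysFree {P : Type} {φ : RFormula P} (hφ : φ.AlwaysFree) (σ : ℕ → Set P) :
    rV (.always φ) σ =
      (lW (.always φ.toLTL) σ, lW (.eventually (.always φ.toLTL)) σ,
        lW (.always (.eventually φ.toLTL)) σ, lW (.eventually φ.toLTL) σ) := by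
  simp only [rV, rV_eq_tconst_lW hφ, tconst, lW, suffix_suffix]

section ResponseSequences

variable {A B : ℕ → Prop}

theorem eventually_always_response_iff :
    (∃ j, ∀ i, ¬A (j + i) ∨ ∃ m, B (j + i + m)) ↔
      (∃ j, ∀ i, ¬A (j + i)) ∨ ∀ j, ∃ i, B (j + i) := by
  refine ⟨fun ⟨j, hj⟩ => or_iff_not_imp_right.2 fun hB => ?_, ?_⟩
  · push Not at hB
    obtain ⟨k, hk⟩ := hB
    refine ⟨j + k, fun i => ?_⟩
    rw [add_assoc]
    refine (hj (k + i)).resolve_right fun ⟨m, hm⟩ => hk (j + i + m) ?_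
    rwa [show k + (j + i + m) = j + (k + i) + m by ring]
  · rintro (⟨j, hA⟩ | hB)
    · exact ⟨j, fun i => .inl (hA i)⟩
    · exact ⟨0, fun i => .inr (hB (0 + i))⟩

theorem always_eventually_response_iff :
    (∀ j, ∃ i, ¬A (j + i) ∨ ∃ m, B (j + i + m)) ↔
      (∀ j, ∃ i, ¬A (j + i)) ∨ ∀ j, ∃ i, B (j + i) := by
  refine ⟨fun h => or_iff_not_imp_left.2 fun hA k => ?_, ?_⟩
  · push Not at hA
    obtain ⟨j, hj⟩ := hA
    obtain ⟨i, hi | ⟨m, hm⟩⟩ := h (j + k)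
    · exact absurd (hj (k + i)) (by rwa [← add_assoc])
    · exact ⟨j + i + m, by rwa [show k + (j + i + m) = j + k + i + m by ring]⟩
  · rintro (hA | hB) j
    · obtain ⟨i, hi⟩ := hA j
      exact ⟨i, .inl hi⟩
    · exact ⟨0, .inr (hB (j + 0))⟩

theorem exists_response_iff :
    (∃ i, ¬A i ∨ ∃ m, B (i + m)) ↔ (∃ i, ¬A i) ∨ ∃ i, B i := by
  constructor
  · rintro ⟨i, hi | ⟨m, hm⟩⟩
    exacts [.inl ⟨i, hi⟩, .inr ⟨i + m, hm⟩]
  · rintro (⟨i, hi⟩ | ⟨i, hi⟩)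
    exacts [⟨i, .inl hi⟩, ⟨0, .inr ⟨i, by rwa [zero_add]⟩⟩]

end ResponseSequences

section LTLResponse

variable {P : Type} (φ ψ : LFormula P) (σ : ℕ → Set P)

theorem lW_eventually_always_response :
    lW (.eventually (.always (φ.imp (.eventually ψ)))) σ =
      lW ((LFormula.always (.eventually φ)).imp (.always (.eventually ψ))) σ := by
  rw [Bool.eq_iff_iff]
  simp only [lW, LFormula.imp, suffix_suffix, Bool.or_eq_true, Bool.not_eq_true', bInf_eq_true,
    bSup_eq_true, bInf_eq_false, bSup_eq_false]
  simpa using eventually_always_response_iff (A := fun n => lW φ (suffix σ n) = true)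
    (B := fun n => lW ψ (suffix σ n) = true)

theorem lW_always_eventually_response :
    lW (.always (.eventually (φ.imp (.eventually ψ)))) σ =
      lW ((LFormula.eventually (.always φ)).imp (.always (.eventually ψ))) σ := by
  rw [Bool.eq_iff_iff]
  simp only [lW, LFormula.imp, suffix_suffix, Bool.or_eq_true, Bool.not_eq_true', bInf_eq_true,
    bSup_eq_true, bInf_eq_false, bSup_eq_false]
  simpa using always_eventually_response_iff (A := fun n => lW φ (suffix σ n) = true)
    (B := fun n => lW ψ (suffix σ n) = true)

theorem lW_eventually_response :
    lW (.eventually (φ.imp (.eventually ψ))) σ =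
      lW ((LFormula.always φ).imp (.eventually ψ)) σ := by
  rw [Bool.eq_iff_iff]
  simp only [lW, LFormula.imp, suffix_suffix, Bool.or_eq_true, Bool.not_eq_true', bSup_eq_true,
    bInf_eq_false]
  simpa using exists_response_iff (A := fun n => lW φ (suffix σ n) = true)
    (B := fun n => lW ψ (suffix σ n) = true)

end LTLResponse

/-- For atomic propositions `p, q` and every infinite word `σ`:
`V(σ, □(p ⇒ ◇q)) = (W(σ,□(p ⇒ ◇q)), W(σ,□◇p ⇒ □◇q), W(σ,◇□p ⇒ □◇q), W(σ,□p ⇒ ◇q))`,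
i.e. the four components are the LTL response property, strong fairness, weak fairness,
and the implication `□p ⇒ ◇q`. -/
theorem robust_response_recovers_fairness {P : Type} (p q : P) (σ : ℕ → Set P) :
    rV (.always (.imp (.atom p) (.eventually (.atom q)))) σ =
      (lW (.always (LFormula.imp (.atom p) (.eventually (.atom q)))) σ,
       lW (LFormula.imp (.always (.eventually (.atom p)))
             (.always (.eventually (.atom q)))) σ,
       lW (LFormula.imp (.eventually (.always (.atom p)))
             (.always (.eventually (.atom q)))) σ,
       lW (LFormula.imp (.always (.atom p)) (.eventually (.atom q))) σ) := by
  rw [rV_always_of_alwaysFree (φ := .imp (.atom p) (.eventually (.atom q))) ⟨trivial, trivial⟩]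
  simp only [RFormula.toLTL, lW_eventually_always_response, lW_always_eventually_response,
    lW_eventually_response]
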